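/- arXiv:1704.03772 — 2 statements merged into one kernel-verified Lean document; each statement's English description precedes it below -/
import Mathlib

section
/- Let ψ : 𝒫(A) → 𝒫(A) be monotone, μ = lfp(ψ), and φ(S) = (A \ μ) ∪ ψ(S ∩ μ). Then for every nonzero ordinal γ: φ^(γ+1)(∅) ⊆ φ^γ(∅) holds if and only if ψ^(γ+1)(∅) ⊆ ψ^γ(∅). Hence if ψ converges to its least fixed point in exactly α steps for some ordinal α > 0 (i.e., ψ^α(∅) = ψ^(α+1)(∅) and ψ^β(∅) ⊊ ψ^(β+1)(∅) for all β < α), then so does φ, and moreover lfp(φ) = A. -/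
open Set

universe u v
/-- Ordinal-indexed iterates of a map on a powerset, starting from ∅,
taking unions at limit stages. -/
noncomputable def iter {A : Type u} (f : Set A → Set A) (o : Ordinal.{v}) : Set A :=
  Ordinal.limitRecOn o ∅ (fun _ ih => f ih)
    (fun o _ ih => ⋃ (b : Ordinal.{v}) (h : b < o), ih b h)

/-!
Below its least fixed point `μ` the map `φ` acts exactly as `ψ`, while everything outside `μ`
enters at the first step and stays. Hence `φ^γ(∅) = μᶜ ∪ ψ^γ(∅)` for `γ ≥ 1`; as all `ψ^γ(∅)`
lie in `μ`, comparing two such stages of `φ` is the same as comparing the stages of `ψ`.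
Every prefixed point `S` of `φ` contains `μᶜ`, and `S ∩ μ` is a prefixed point of `ψ`, so it
contains `μ`; thus `lfp φ = A`.
-/

section Iter

variable {A : Type u} (f : Set A → Set A)

theorem iter_zero : iter f (0 : Ordinal.{v}) = ∅ :=
  Ordinal.limitRecOn_zero ..

theorem iter_add_one (o : Ordinal.{v}) : iter f (o + 1) = f (iter f o) :=
  Ordinal.limitRecOn_add_one ..

theorem iter_of_isSuccLimit {o : Ordinal.{v}} (h : Order.IsSuccLimit o) :
    iter f o = ⋃ b < o, iter f b :=
  Ordinal.limitRecOn_limit _ _ _ _ h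

variable {f}

theorem iter_subset_of_map_subset (hf : Monotone f) {s : Set A} (hs : f s ⊆ s)
    (o : Ordinal.{v}) : iter f o ⊆ s := by
  induction o using Ordinal.limitRecOn with
  | zero => simp [iter_zero]
  | add_one o ih => rw [iter_add_one]; exact (hf ih).trans hs
  | limit o ho ih => rw [iter_of_isSuccLimit f ho]; exact iUnion₂_subset ih

end Iter

section Restrict

variable {A : Type u} {ψ φ : Set A → Set A} {μ : Set A}

theorem iter_eq_compl_union_iter (hφ : ∀ S, φ S = μᶜ ∪ ψ (S ∩ μ))
    (hsub : ∀ o : Ordinal.{v}, iter ψ o ⊆ μ) {γ : Ordinal.{v}} (hγ : γ ≠ 0) : iter φ γ = μᶜ ∪ iter ψ γ := by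
  induction γ using Ordinal.limitRecOn with
  | zero => exact absurd rfl hγ
  | add_one o ih =>
    rw [iter_add_one, iter_add_one, hφ]
    rcases eq_or_ne o 0 with rfl | ho
    · simp [iter_zero]
    · rw [ih ho, union_inter_distrib_right, compl_inter_self, empty_union,
        inter_eq_left.mpr (hsub o)]
  | limit o ho ih =>
    have hone : μᶜ ⊆ iter φ 1 := by
      rw [← zero_add 1, iter_add_one, hφ]
      exact subset_union_left
    rw [iter_of_isSuccLimit φ ho, iter_of_isSuccLimit ψ ho]
    refine Subset.antisymm (iUnion₂_subset fun b hb => ?_)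
      (union_subset ?_ (iUnion₂_subset fun b hb => ?_))
    · rcases eq_or_ne b 0 with rfl | hb0
      · simp [iter_zero]
      · rw [ih b hb hb0]
        exact union_subset_union_right _ (subset_iUnion₂ (s := fun b _ => iter ψ b) b hb)
    · exact hone.trans (subset_iUnion₂ (s := fun b _ => iter φ b) 1
        (Ordinal.one_lt_of_isSuccLimit ho))
    · rcases eq_or_ne b 0 with rfl | hb0
      · simp [iter_zero]
      · refine (subset_iUnion₂ (s := fun b _ => iter φ b) b hb).trans' ?_
        rw [ih b hb hb0]
        exact subset_union_right

theorem iter_subset_compl_union_iter (hφ : ∀ S, φ S = μᶜ ∪ ψ (S ∩ μ))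
    (hsub : ∀ o : Ordinal.{v}, iter ψ o ⊆ μ) (γ : Ordinal.{v}) :
    iter φ γ ⊆ μᶜ ∪ iter ψ γ := by
  rcases eq_or_ne γ 0 with rfl | hγ
  · simp [iter_zero]
  · exact (iter_eq_compl_union_iter hφ hsub hγ).le

theorem compl_union_subset_compl_union_iff {s t : Set A} (hs : s ⊆ μ) :
    μᶜ ∪ s ⊆ μᶜ ∪ t ↔ s ⊆ t :=
  ⟨fun h _ hx => (h (Or.inr hx)).resolve_left (not_not.2 (hs hx)),
    union_subset_union_right _⟩

theorem compl_union_ssubset_compl_union {s t : Set A} (hst : s ⊂ t) (ht : t ⊆ μ) :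
    μᶜ ∪ s ⊂ μᶜ ∪ t :=
  ⟨union_subset_union_right _ hst.subset,
    fun h => hst.not_subset ((compl_union_subset_compl_union_iff ht).1 h)⟩

theorem map_sInter_prefixed_subset (hψ : Monotone ψ) :
    ψ (⋂₀ {S | ψ S ⊆ S}) ⊆ ⋂₀ {S | ψ S ⊆ S} :=
  (OrderHom.map_lfp ⟨ψ, hψ⟩).le

theorem sInter_prefixed_eq_univ (hψ : Monotone ψ) (hμ : μ = ⋂₀ {S | ψ S ⊆ S})
    (hφ : ∀ S, φ S = μᶜ ∪ ψ (S ∩ μ)) : ⋂₀ {S | φ S ⊆ S} = univ := by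
  refine eq_univ_of_forall fun x S hS => ?_
  change φ S ⊆ S at hS
  rw [hφ, union_subset_iff] at hS
  obtain ⟨hcompl, hmap⟩ := hS
  have hψμ : ψ μ ⊆ μ := hμ ▸ map_sInter_prefixed_subset hψ
  have hprefixed : ψ (S ∩ μ) ⊆ S ∩ μ :=
    subset_inter hmap ((hψ inter_subset_right).trans hψμ)
  have hμS : μ ⊆ S := by
    rw [hμ] at hprefixed ⊢
    exact (sInter_subset_of_mem hprefixed).trans inter_subset_left
  by_cases hx : x ∈ μ
  exacts [hμS hx, hcompl hx]

end Restrict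

theorem stmt13 {A : Type u} (ψ : Set A → Set A) (hψ : Monotone ψ)
    (μ : Set A) (hμ : μ = ⋂₀ {S : Set A | ψ S ⊆ S})
    (φ : Set A → Set A) (hφ : ∀ S, φ S = μᶜ ∪ ψ (S ∩ μ)) :
    (∀ γ : Ordinal.{v}, γ ≠ 0 →
        (iter φ (γ + 1) ⊆ iter φ γ ↔ iter ψ (γ + 1) ⊆ iter ψ γ)) ∧
      (∀ α : Ordinal.{v}, 0 < α →
        iter ψ α = iter ψ (α + 1) → (∀ β < α, iter ψ β ⊂ iter ψ (β + 1)) →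
          (iter φ α = iter φ (α + 1) ∧ (∀ β < α, iter φ β ⊂ iter φ (β + 1)) ∧
            ⋂₀ {S : Set A | φ S ⊆ S} = Set.univ)) := by
  have hψμ : ψ μ ⊆ μ := hμ ▸ map_sInter_prefixed_subset hψ
  have hsub : ∀ o : Ordinal.{v}, iter ψ o ⊆ μ := iter_subset_of_map_subset hψ hψμ
  have key : ∀ {γ : Ordinal.{v}}, γ ≠ 0 → iter φ γ = μᶜ ∪ iter ψ γ :=
    iter_eq_compl_union_iter hφ hsub
  have hsucc : ∀ γ : Ordinal.{v}, γ + 1 ≠ 0 := Order.succ_ne_bot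
  refine ⟨fun γ hγ => ?_, fun α hα hfix hstrict => ⟨?_, fun β hβ => ?_,
    sInter_prefixed_eq_univ hψ hμ hφ⟩⟩
  · rw [key hγ, key (hsucc γ)]
    exact compl_union_subset_compl_union_iff (hsub _)
  · rw [key hα.ne', key (hsucc α), hfix]
  · rw [key (hsucc β)]
    exact (iter_subset_compl_union_iter hφ hsub β).trans_ssubset
      (compl_union_ssubset_compl_union (hstrict β hβ) (hsub _))
end

section
/- Let κ > ℵ₀ be regular, let f : 𝒫(B) × 𝒫(A) → 𝒫(B) be monotone and κ-continuous in each variable, let g(X) = gfp(Z ↦ f(Z,X)), and suppose b ∈ g(X). Then there exist sequences (Z_n)_{n≥0} of κ-small subsets of B and (X_n)_{n≥1} of κ-small subsets of X with Z₀ = {b} and Z_n ⊆ f(Z_{n+1}, X_{n+1}) for all n; setting Z_ω = ⋃_n Z_n and X_ω = ⋃_{n≥1} X_n, both are κ-small, Z_ω ⊆ f(Z_ω, X_ω), and hence b ∈ gfp(Z ↦ f(Z, X_ω)) with X_ω ⊆ X κ-small. -/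
/-!
Every point of the greatest fixed point `W = gfp (f · X)` lies in `f W X`, and κ-continuity in
each variable lets a κ-small part of `f W X` be covered by `f Z X'` with `Z ⊆ W`, `X' ⊆ X`
κ-small: each point needs only a κ-small witness, and fewer than κ κ-small witnesses have a
κ-small union by regularity. Starting from `{b}` and iterating this shrinking step gives the
sequences; since `κ > ℵ₀`, their unions stay κ-small, and `⋃ Zₙ` is a post-fixed point of
`f · (⋃ Xₙ)` because each `Zₙ` is covered by the next stage.
-/

open Set Cardinal

/-- A family of subsets is κ-directed if every subfamily of cardinality < κ
has an upper bound in the family. -/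
def KDirected {A : Type u} (κ : Cardinal.{u}) (I : Set (Set A)) : Prop :=
  ∀ J ⊆ I, Cardinal.mk ↥J < κ → ∃ U ∈ I, ∀ V ∈ J, V ⊆ U

/-- A map between powersets is κ-continuous if it preserves unions of κ-directed families. -/
def KCont {A B : Type u} (κ : Cardinal.{u}) (f : Set A → Set B) : Prop :=
  ∀ I : Set (Set A), KDirected κ I → f (⋃₀ I) = ⋃ S ∈ I, f S

section

variable {α β : Type u} {κ : Cardinal.{u}}

def smallSubsets (κ : Cardinal.{u}) (W : Set α) : Set (Set α) :=
  {Z | Z ⊆ W ∧ #Z < κ}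

lemma kDirected_smallSubsets (hκ : κ.IsRegular) (W : Set α) :
    KDirected κ (smallSubsets κ W) := by
  intro J hJ hJκ
  refine ⟨⋃₀ J, ⟨sUnion_subset fun V hV => (hJ hV).1, ?_⟩, fun V hV => subset_sUnion_of_mem hV⟩
  rw [sUnion_eq_iUnion]
  exact (card_iUnion_lt_iff_forall_of_isRegular hκ hJκ).2 fun V => (hJ V.2).2

lemma sUnion_smallSubsets (hκ : κ.IsRegular) (W : Set α) : ⋃₀ smallSubsets κ W = W := by
  refine (sUnion_subset fun V hV => hV.1).antisymm fun a ha => ?_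
  have hsingleton : #({a} : Set α) < κ := by simpa using hκ.nat_lt 1
  exact ⟨{a}, ⟨singleton_subset_iff.2 ha, hsingleton⟩, rfl⟩

lemma KCont.exists_mem_smallSubsets {h : Set α → Set β} (hh : KCont κ h) (hκ : κ.IsRegular)
    {W : Set α} {x : β} (hx : x ∈ h W) : ∃ Z ∈ smallSubsets κ W, x ∈ h Z := by
  rw [← sUnion_smallSubsets hκ W, hh _ (kDirected_smallSubsets hκ W)] at hx
  simpa only [mem_iUnion, exists_prop] using hx

lemma KCont.exists_smallSubsets_subset {h : Set α → Set β} (hh : KCont κ h) (hmono : Monotone h)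
    (hκ : κ.IsRegular) {W : Set α} {S : Set β} (hSκ : #S < κ) (hSW : S ⊆ h W) :
    ∃ Z ∈ smallSubsets κ W, S ⊆ h Z := by
  choose Z hZW hZ using fun s : S => hh.exists_mem_smallSubsets hκ (hSW s.2)
  refine ⟨⋃ s, Z s, ⟨iUnion_subset fun s => (hZW s).1,
    (card_iUnion_lt_iff_forall_of_isRegular hκ hSκ).2 fun s => (hZW s).2⟩, fun s hs => ?_⟩
  exact hmono (subset_iUnion Z ⟨s, hs⟩) (hZ ⟨s, hs⟩)

lemma exists_smallSubsets_subset_apply {f : Set β → Set α → Set β}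
    (hmono : ∀ Z Z' X X', Z ⊆ Z' → X ⊆ X' → f Z X ⊆ f Z' X')
    (hc1 : ∀ X, KCont κ (fun Z => f Z X)) (hc2 : ∀ Z, KCont κ (fun X => f Z X))
    (hκ : κ.IsRegular) {W S : Set β} {X : Set α} (hSκ : #S < κ) (hSW : S ⊆ f W X) :
    ∃ Z ∈ smallSubsets κ W, ∃ X' ∈ smallSubsets κ X, S ⊆ f Z X' := by
  obtain ⟨Z, hZ, hSZ⟩ := (hc1 X).exists_smallSubsets_subset
    (fun _ _ h => hmono _ _ _ _ h subset_rfl) hκ hSκ hSW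
  obtain ⟨X', hX', hSX'⟩ := (hc2 Z).exists_smallSubsets_subset
    (fun _ _ h => hmono _ _ _ _ subset_rfl h) hκ hSκ hSZ
  exact ⟨Z, hZ, X', hX', hSX'⟩

lemma sUnion_setOf_subset_subset_self {h : Set α → Set α} (hmono : Monotone h) :
    ⋃₀ {Z | Z ⊆ h Z} ⊆ h (⋃₀ {Z | Z ⊆ h Z}) :=
  sUnion_subset fun _ hZ => hZ.trans (hmono (subset_sUnion_of_mem hZ))

lemma mk_iUnion_nat_lt (hκ : κ.IsRegular) (hκ₀ : ℵ₀ < κ) {s : ℕ → Set α}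
    (hs : ∀ n, #(s n) < κ) : #(⋃ n, s n) < κ := by
  rw [← ULift.down_surjective.iUnion_comp]
  exact (card_iUnion_lt_iff_forall_of_isRegular hκ (by simpa using hκ₀)).2 fun n => hs n.down

lemma iUnion_subset_apply_iUnion_of_subset_succ {f : Set β → Set α → Set β}
    (hmono : ∀ Z Z' X X', Z ⊆ Z' → X ⊆ X' → f Z X ⊆ f Z' X')
    {Z : ℕ → Set β} {X : ℕ → Set α} (hZ : ∀ n, Z n ⊆ f (Z (n + 1)) (X (n + 1))) :
    ⋃ n, Z n ⊆ f (⋃ n, Z n) (⋃ n ≥ 1, X n) :=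
  iUnion_subset fun n => (hZ n).trans <| hmono _ _ _ _ (subset_iUnion Z (n + 1))
    (subset_iUnion₂_of_subset (n + 1) (Nat.le_add_left 1 n) subset_rfl)

end

lemma exists_seq_of_forall_exists {α : Type*} {P : α → Prop} {R : α → α → Prop} {a : α}
    (ha : P a) (h : ∀ x, P x → ∃ y, P y ∧ R x y) :
    ∃ u : ℕ → α, u 0 = a ∧ ∀ n, P (u n) ∧ R (u n) (u (n + 1)) := by
  choose! next hnextP hnextR using h
  have hP : ∀ n, P (next^[n] a) := fun n => by
    induction n with
    | zero => exact ha
    | succ n ih => simpa only [Function.iterate_succ_apply'] using hnextP _ ih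
  refine ⟨fun n => next^[n] a, rfl, fun n => ⟨hP n, ?_⟩⟩
  simpa only [Function.iterate_succ_apply'] using hnextR _ (hP n)

theorem stmt16 {A B : Type u} (κ : Cardinal.{u}) (hκ : κ.IsRegular)
    (haleph : Cardinal.aleph0 < κ)
    (f : Set B → Set A → Set B)
    (hmono : ∀ Z Z' X X', Z ⊆ Z' → X ⊆ X' → f Z X ⊆ f Z' X')
    (hc1 : ∀ X, KCont κ (fun Z => f Z X))
    (hc2 : ∀ Z, KCont κ (fun X => f Z X))
    (X : Set A) (b : B) (hb : b ∈ ⋃₀ {Z : Set B | Z ⊆ f Z X}) :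
    ∃ (Z : ℕ → Set B) (Xs : ℕ → Set A),
      Z 0 = {b} ∧
      (∀ n, Cardinal.mk ↥(Z n) < κ) ∧
      (∀ n ≥ 1, Xs n ⊆ X ∧ Cardinal.mk ↥(Xs n) < κ) ∧
      (∀ n, Z n ⊆ f (Z (n + 1)) (Xs (n + 1))) ∧
      Cardinal.mk ↥(⋃ n, Z n) < κ ∧
      Cardinal.mk ↥(⋃ n ≥ 1, Xs n) < κ ∧
      (⋃ n ≥ 1, Xs n) ⊆ X ∧
      (⋃ n, Z n) ⊆ f (⋃ n, Z n) (⋃ n ≥ 1, Xs n) ∧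
      b ∈ ⋃₀ {Z' : Set B | Z' ⊆ f Z' (⋃ n ≥ 1, Xs n)} := by
  set W := ⋃₀ {Z : Set B | Z ⊆ f Z X}
  have hW : W ⊆ f W X :=
    sUnion_setOf_subset_subset_self fun _ _ h => hmono _ _ _ _ h subset_rfl
  have hstart : ({b}, ∅) ∈ smallSubsets κ W ×ˢ smallSubsets κ X :=
    ⟨⟨singleton_subset_iff.2 hb, by simpa using hκ.nat_lt 1⟩,
      empty_subset X, by simpa using hκ.pos⟩
  obtain ⟨u, hu0, hu⟩ := exists_seq_of_forall_exists (R := fun p q => p.1 ⊆ f q.1 q.2) hstart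
    fun p hp => by
      obtain ⟨Z, hZ, X', hX', hcover⟩ :=
        exists_smallSubsets_subset_apply hmono hc1 hc2 hκ hp.1.2 (hp.1.1.trans hW)
      exact ⟨(Z, X'), ⟨hZ, hX'⟩, hcover⟩
  have hZ0 : (u 0).1 = {b} := by rw [hu0]
  have hchain := fun n => (hu n).2
  have hsmallX : #(⋃ n ≥ 1, (u n).2) < κ :=
    (mk_le_mk_of_subset (iUnion₂_subset_iUnion _ _)).trans_lt
      (mk_iUnion_nat_lt hκ haleph fun n => (hu n).1.2.2)
  have hpost := iUnion_subset_apply_iUnion_of_subset_succ hmono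
    (Z := fun n => (u n).1) (X := fun n => (u n).2) hchain
  refine ⟨fun n => (u n).1, fun n => (u n).2, hZ0, fun n => (hu n).1.1.2,
    fun n _ => (hu n).1.2, hchain, mk_iUnion_nat_lt hκ haleph fun n => (hu n).1.1.2, hsmallX,
    iUnion₂_subset fun n _ => (hu n).1.2.1, hpost, ⟨_, hpost, mem_iUnion_of_mem 0 (hZ0 ▸ rfl)⟩⟩
end
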